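/- arXiv:hep-th/9412058 — 2 statements merged into one kernel-verified Lean document; each statement's English description precedes it below -/
import Mathlib

section
/- Let A be a cosemisimple bialgebra over ℂ (its coalgebra is a direct sum of the matrix subcoalgebras A_v spanned by matrix elements of the inequivalent irreducible corepresentations v, with A_I = ℂ·1). Let g = (g_{αβ}) be an irreducible corepresentation of A that is not equivalent to the trivial one, and suppose c = (c_α) is a vector of elements of A satisfying Δ c_α = g_{αβ} ⊗ c_β + c_α ⊗ 1 (summation over β implied). Then there exist scalars λ_α ∈ ℂ with c_α = λ_α·1 − g_{αβ} λ_β. -/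
open scoped TensorProduct DirectSum

/-- Let `A` be a cosemisimple bialgebra over `ℂ`: as a coalgebra, `A` is an internal direct
sum of subcoalgebras `A_v` (the spans of matrix elements of the inequivalent irreducible
corepresentations), with `A_{i0} = ℂ·1` the component of the trivial corepresentation.
Let `g` be an irreducible corepresentation whose matrix elements lie in a component
`A_{vg}` with `vg ≠ i0` (i.e. `g` is not equivalent to the trivial corepresentation), and
suppose `c = (c_α)` satisfies `Δ c_α = Σ_β g_{αβ} ⊗ c_β + c_α ⊗ 1`. Then there are scalars
`λ_α ∈ ℂ` with `c_α = λ_α·1 − Σ_β λ_β g_{αβ}`. -/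
theorem skew_primitive_vector_is_trivial
    {A : Type*} [Ring A] [Bialgebra ℂ A]
    {V : Type*} [DecidableEq V] (Av : V → Submodule ℂ A)
    (hinternal : DirectSum.IsInternal Av)
    (i0 : V) (hI : Av i0 = Submodule.span ℂ {(1 : A)})
    (hcomul : ∀ (v : V), ∀ x ∈ Av v,
      Coalgebra.comul (R := ℂ) x ∈ LinearMap.range (TensorProduct.mapIncl (Av v) (Av v)))
    {n : ℕ} (g : Matrix (Fin n) (Fin n) A)
    (hg_corep : ∀ α β, Coalgebra.comul (R := ℂ) (g α β) = ∑ γ, g α γ ⊗ₜ[ℂ] g γ β)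
    (hg_counit : ∀ α β, Coalgebra.counit (R := ℂ) (g α β) = if α = β then 1 else 0)
    (vg : V) (hvg : vg ≠ i0) (hg_mem : ∀ α β, g α β ∈ Av vg)
    (c : Fin n → A)
    (hc : ∀ α, Coalgebra.comul (R := ℂ) (c α) =
      (∑ β, g α β ⊗ₜ[ℂ] c β) + c α ⊗ₜ[ℂ] 1) :
    ∃ lam : Fin n → ℂ, ∀ α, c α = lam α • (1 : A) - ∑ β, lam β • g α β := by
  classical
  set e : (⨁ v, Av v) ≃ₗ[ℂ] A :=
    LinearEquiv.ofBijective (DirectSum.coeLinearMap Av) hinternal with he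
  -- the projection onto the `v`-th component, as a map `A →ₗ[ℂ] A`
  set p : V → (A →ₗ[ℂ] A) := fun v =>
    (Av v).subtype ∘ₗ (DirectSum.component ℂ V (fun v => Av v) v) ∘ₗ e.symm.toLinearMap
    with hpdef
  have hp_apply : ∀ (v : V) (x : A), p v x = ((e.symm x) v : A) := fun v x => rfl
  have hp_mem : ∀ (v : V) (x : A), p v x ∈ Av v := fun v x => ((e.symm x) v).2
  have hp_eq : ∀ (v : V) (x : A), x ∈ Av v → p v x = x := by
    intro v x hx
    rw [hp_apply, hinternal.ofBijective_coeLinearMap_of_mem hx]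
  have hp_ne : ∀ (v w : V) (x : A), x ∈ Av w → v ≠ w → p v x = 0 := by
    intro v w x hx hvw
    rw [hp_apply, hinternal.ofBijective_coeLinearMap_of_mem_ne (Ne.symm hvw) hx]
    rfl
  -- decomposition of an element as a finite sum of its components
  have hsum : ∀ (x : A) (S : Finset V), (DFinsupp.support (e.symm x)) ⊆ S →
      x = ∑ v ∈ S, p v x := by
    intro x S hS
    have h1 : x = DirectSum.coeLinearMap Av (e.symm x) := (e.apply_symm_apply x).symm
    have h2 : (e.symm x) = ∑ v ∈ DFinsupp.support (e.symm x),
        DirectSum.of (fun v => Av v) v ((e.symm x) v) :=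
      (DirectSum.sum_support_of _).symm
    have h3 : ∑ v ∈ S, p v x = ∑ v ∈ DFinsupp.support (e.symm x), p v x := by
      refine (Finset.sum_subset hS ?_).symm
      intro v _ hv
      rw [hp_apply, DFinsupp.notMem_support_iff.mp hv]
      simp
    rw [h3]
    nth_rewrite 1 [h1]
    nth_rewrite 1 [h2]
    rw [map_sum]
    exact Finset.sum_congr rfl fun v _ => by rw [DirectSum.coeLinearMap_of, hp_apply]
  -- key: mixed components of any comultiplication vanish
  have hkey : ∀ (u w : V), u ≠ w → ∀ x : A,
      TensorProduct.map (p u) (p w) (Coalgebra.comul (R := ℂ) x) = 0 := by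
    intro u w huw x
    rw [hsum x (DFinsupp.support (e.symm x)) (le_refl _), map_sum, map_sum]
    apply Finset.sum_eq_zero
    intro v _
    obtain ⟨y, hy⟩ := hcomul v (p v x) (hp_mem v x)
    rw [← hy, TensorProduct.mapIncl, ← LinearMap.comp_apply, ← TensorProduct.map_comp]
    rcases ne_or_eq u v with h | h
    · have hz : p u ∘ₗ (Av v).subtype = 0 := by
        ext z; exact hp_ne u v z z.2 h
      rw [hz, TensorProduct.map_zero_left, LinearMap.zero_apply]
    · have h' : w ≠ v := by rintro rfl; exact huw h
      have hz : p w ∘ₗ (Av v).subtype = 0 := by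
        ext z; exact hp_ne w v z z.2 h'
      rw [hz, TensorProduct.map_zero_right, LinearMap.zero_apply]
  -- a retraction killing the second tensor factor: x ⊗ 1 ↦ x
  set q : A ⊗[ℂ] A →ₗ[ℂ] A :=
    (TensorProduct.rid ℂ A).toLinearMap ∘ₗ
      TensorProduct.map LinearMap.id (Coalgebra.counit (R := ℂ)) with hqdef
  have hq : ∀ (x y : A), q (x ⊗ₜ[ℂ] y) = Coalgebra.counit (R := ℂ) y • x := by
    intro x y
    simp [hqdef, TensorProduct.map_tmul]
  have hone : (1 : A) ∈ Av i0 := by rw [hI]; exact Submodule.mem_span_singleton_self 1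
  -- the scalars
  have hlam : ∀ β, ∃ a : ℂ, a • (1 : A) = p i0 (c β) := by
    intro β
    have := hp_mem i0 (c β)
    rw [hI, Submodule.mem_span_singleton] at this
    exact this
  choose lam hlam using hlam
  refine ⟨lam, fun α => ?_⟩
  -- component equation in `A_{vg} ⊗ A_{i0}`
  have heq1 : (∑ β, lam β • g α β) + p vg (c α) = 0 := by
    have h0 := hkey vg i0 hvg (c α)
    rw [hc α, map_add, map_sum] at h0
    simp only [TensorProduct.map_tmul] at h0
    have h1 : ∀ β, p vg (g α β) = g α β := fun β => hp_eq vg _ (hg_mem α β)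
    have h2 : p i0 (1 : A) = 1 := hp_eq i0 1 hone
    simp only [h1, h2, ← hlam] at h0
    have h3 := congrArg q h0
    rw [map_add, map_sum, map_zero] at h3
    simp only [hq, map_smul, Bialgebra.counit_one, smul_eq_mul, mul_one, one_smul] at h3
    exact h3
  -- all other components of `c α` vanish
  have heq2 : ∀ u, u ≠ vg → u ≠ i0 → p u (c α) = 0 := by
    intro u hu1 hu2
    have h0 := hkey u i0 hu2 (c α)
    rw [hc α, map_add, map_sum] at h0
    simp only [TensorProduct.map_tmul] at h0
    have h1 : ∀ β, p u (g α β) = 0 := fun β => hp_ne u vg _ (hg_mem α β) hu1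
    have h2 : p i0 (1 : A) = 1 := hp_eq i0 1 hone
    simp only [h1, h2, TensorProduct.zero_tmul, Finset.sum_const_zero, zero_add] at h0
    have h3 := congrArg q h0
    rw [map_zero] at h3
    rw [hq, Bialgebra.counit_one, one_smul] at h3
    exact h3
  -- assemble
  set T : Finset V := DFinsupp.support (e.symm (c α)) \ {i0, vg} with hT
  have hi0T : i0 ∉ insert vg T := by
    simp only [Finset.mem_insert, not_or]
    refine ⟨Ne.symm hvg, ?_⟩
    simp [hT]
  have hvgT : vg ∉ T := by
    simp [hT]
  have hSsub : DFinsupp.support (e.symm (c α)) ⊆ insert i0 (insert vg T) := by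
    intro v hv
    simp only [Finset.mem_insert, hT, Finset.mem_sdiff, Finset.mem_insert, Finset.mem_singleton]
    by_cases h1 : v = i0
    · exact Or.inl h1
    · by_cases h2 : v = vg
      · exact Or.inr (Or.inl h2)
      · exact Or.inr (Or.inr ⟨hv, fun h => h.elim h1 h2⟩)
  have hdec := hsum (c α) _ hSsub
  rw [Finset.sum_insert hi0T, Finset.sum_insert hvgT] at hdec
  have hTzero : ∑ v ∈ T, p v (c α) = 0 := by
    apply Finset.sum_eq_zero
    intro v hv
    simp only [hT, Finset.mem_sdiff, Finset.mem_insert, Finset.mem_singleton] at hv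
    push_neg at hv
    exact heq2 v hv.2.2 hv.2.1
  rw [hTzero, add_zero, ← hlam α] at hdec
  have hpvg : p vg (c α) = -(∑ β, lam β • g α β) := by
    rw [eq_neg_iff_add_eq_zero, add_comm]
    exact heq1
  rw [hdec, hpvg, sub_eq_add_neg]
end

section
/- Let A be a cosemisimple Hopf algebra over ℂ (every corepresentation is completely reducible) and let v ∈ M_N(A) be a corepresentation. Suppose ρ = (ρ_k) ∈ A^N satisfies Δρ_k = v_{kl} ⊗ ρ_l + ρ_k ⊗ 1 for all k (summation over l implied); equivalently, the (N+1)×(N+1) matrix [[v, ρ],[0, 1]] is a corepresentation of A. Then there exists a vector w ∈ ℂ^N such that ρ_k = w_k·1 − v_{kl} w_l for all k. -/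
open scoped TensorProduct

noncomputable section

variable {A : Type*} [Ring A] [HopfAlgebra ℂ A]

/-- `u ∈ M_n(A)` is a corepresentation: `Δu_{ij} = Σ_k u_{ik} ⊗ u_{kj}`,
`ε(u_{ij}) = δ_{ij}`. -/
def IsCorep {n : ℕ} (u : Matrix (Fin n) (Fin n) A) : Prop :=
  (∀ i j, Coalgebra.comul (R := ℂ) (u i j) = ∑ k, u i k ⊗ₜ[ℂ] u k j) ∧
  (∀ i j, Coalgebra.counit (R := ℂ) (u i j) = if i = j then 1 else 0)

/-- A subspace `W ⊆ ℂ^n` is invariant for the corepresentation `u` if for every `x ∈ W`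
the vector `u·x ∈ A^n` is an `A`-linear combination of vectors of `W`
(i.e. `u·x ∈ A ⊗ W`). -/
def CorepInvariant {n : ℕ} (u : Matrix (Fin n) (Fin n) A)
    (W : Submodule ℂ (Fin n → ℂ)) : Prop :=
  ∀ x ∈ W, Matrix.mulVec u (fun j => algebraMap ℂ A (x j)) ∈
    Submodule.span A ((fun (w : Fin n → ℂ) (j : Fin n) => algebraMap ℂ A (w j)) ''
      (W : Set (Fin n → ℂ)))

/-- The extended corepresentation `[[v, ρ],[0, 1]]`. -/
def ExtCorep {N : ℕ} (v : Matrix (Fin N) (Fin N) A) (ρ : Fin N → A) :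
    Matrix (Fin (N+1)) (Fin (N+1)) A :=
  Matrix.of fun i j =>
    Fin.lastCases (Fin.lastCases (1:A) (fun _ => (0:A)) j)
      (fun i' => Fin.lastCases (ρ i') (fun j' => v i' j') j) i

variable {N : ℕ} (v : Matrix (Fin N) (Fin N) A) (ρ : Fin N → A)

omit [HopfAlgebra ℂ A] in
@[simp] lemma extCorep_cc (i j : Fin N) : ExtCorep v ρ i.castSucc j.castSucc = v i j := by
  simp [ExtCorep]

omit [HopfAlgebra ℂ A] in
@[simp] lemma extCorep_cl (i : Fin N) : ExtCorep v ρ i.castSucc (Fin.last N) = ρ i := by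
  simp [ExtCorep]

omit [HopfAlgebra ℂ A] in
@[simp] lemma extCorep_lc (j : Fin N) : ExtCorep v ρ (Fin.last N) j.castSucc = 0 := by
  simp [ExtCorep]

omit [HopfAlgebra ℂ A] in
@[simp] lemma extCorep_ll : ExtCorep v ρ (Fin.last N) (Fin.last N) = 1 := by
  simp [ExtCorep]

lemma extCorep_isCorep (hv : IsCorep v)
    (hρ : ∀ k, Coalgebra.comul (R := ℂ) (ρ k) =
      (∑ l, v k l ⊗ₜ[ℂ] ρ l) + ρ k ⊗ₜ[ℂ] 1)
    (hε : ∀ k, Coalgebra.counit (R := ℂ) (ρ k) = 0) :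
    IsCorep (ExtCorep v ρ) := by
  constructor
  · intro i j
    induction i using Fin.lastCases with
    | last =>
      induction j using Fin.lastCases with
      | last =>
        simp [Fin.sum_univ_castSucc, Bialgebra.comul_one, Algebra.TensorProduct.one_def]
      | cast j => simp [Fin.sum_univ_castSucc]
    | cast i =>
      induction j using Fin.lastCases with
      | last => simp [Fin.sum_univ_castSucc, hρ i]
      | cast j => simp [Fin.sum_univ_castSucc, hv.1 i j]
  · intro i j
    induction i using Fin.lastCases with
    | last =>
      induction j using Fin.lastCases with
      | last => simp [Bialgebra.counit_one]
      | cast j => simp [(Fin.castSucc_lt_last j).ne']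
    | cast i =>
      induction j using Fin.lastCases with
      | last => simp [hε i, (Fin.castSucc_lt_last i).ne]
      | cast j => simp [hv.2 i j, Fin.castSucc_inj]

/-- The invariant subspace `{x : x_{last} = 0} ⊆ ℂ^{N+1}`. -/
def Wker (N : ℕ) : Submodule ℂ (Fin (N+1) → ℂ) :=
  LinearMap.ker (LinearMap.proj (R := ℂ) (Fin.last N))

lemma mem_Wker {x : Fin (N+1) → ℂ} : x ∈ Wker N ↔ x (Fin.last N) = 0 := Iff.rfl

lemma Wker_invariant : CorepInvariant (ExtCorep v ρ) (Wker N) := by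
  intro x hx
  have hxl : x (Fin.last N) = 0 := hx
  have key : Matrix.mulVec (ExtCorep v ρ) (fun j => algebraMap ℂ A (x j)) =
      ∑ k : Fin N, (Matrix.mulVec (ExtCorep v ρ) (fun j => algebraMap ℂ A (x j)) k.castSucc) •
        (fun j => algebraMap ℂ A ((Pi.single k.castSucc (1:ℂ) : Fin (N+1) → ℂ) j)) := by
    funext j
    induction j using Fin.lastCases with
    | last =>
      simp [Matrix.mulVec, dotProduct, Fin.sum_univ_castSucc, Pi.single_apply, hxl,
        (Fin.castSucc_lt_last _).ne', Finset.sum_apply]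
    | cast j => simp [Finset.sum_apply, Pi.single_apply, Fin.castSucc_inj]
  rw [key]
  refine Submodule.sum_mem _ fun k _ => Submodule.smul_mem _ _ (Submodule.subset_span ?_)
  exact ⟨Pi.single k.castSucc 1,
    by simp [mem_Wker, Pi.single_apply, (Fin.castSucc_lt_last k).ne'], rfl⟩

/-- If every corepresentation of the Hopf algebra `A` is completely reducible (every
invariant subspace has an invariant complement) and `ρ` satisfies
`Δρ_k = Σ_l v_{kl} ⊗ ρ_l + ρ_k ⊗ 1` for a corepresentation `v`, then there is a vector
`w ∈ ℂ^N` with `ρ_k = w_k·1 − Σ_l v_{kl} w_l`. -/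
theorem skew_primitive_splits_of_completely_reducible
    (hcosemis : ∀ (n : ℕ) (u : Matrix (Fin n) (Fin n) A), IsCorep u →
      ∀ W : Submodule ℂ (Fin n → ℂ), CorepInvariant u W →
        ∃ W' : Submodule ℂ (Fin n → ℂ), CorepInvariant u W' ∧ IsCompl W W')
    {N : ℕ} (v : Matrix (Fin N) (Fin N) A) (hv : IsCorep v)
    (ρ : Fin N → A)
    (hρ : ∀ k, Coalgebra.comul (R := ℂ) (ρ k) =
      (∑ l, v k l ⊗ₜ[ℂ] ρ l) + ρ k ⊗ₜ[ℂ] 1) :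
    ∃ w : Fin N → ℂ, ∀ k, ρ k = w k • (1 : A) - ∑ l, w l • v k l := by
  -- trivial ring case
  by_cases hA : (1:A) = 0
  · have : Subsingleton A := subsingleton_of_zero_eq_one hA.symm
    exact ⟨0, fun k => Subsingleton.elim _ _⟩
  -- the counit vanishes on ρ
  have hε : ∀ k, Coalgebra.counit (R := ℂ) (ρ k) = 0 := by
    intro k
    have h1 : (TensorProduct.lid ℂ A)
        (LinearMap.rTensor A (Coalgebra.counit (R := ℂ)) (Coalgebra.comul (ρ k))) = ρ k := by
      rw [Coalgebra.rTensor_counit_comul]; simp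
    rw [hρ k] at h1
    simp only [map_add, map_sum, LinearMap.rTensor_tmul, TensorProduct.lid_tmul, hv.2,
      ite_smul, one_smul, zero_smul, Finset.sum_ite_eq, Finset.mem_univ, if_true] at h1
    have h2 : Coalgebra.counit (R := ℂ) (ρ k) • (1 : A) = 0 := by
      linear_combination (norm := module) h1
    rcases smul_eq_zero.mp h2 with h | h
    · exact h
    · exact absurd h hA
  -- apply complete reducibility
  obtain ⟨W', hW'inv, hcompl⟩ := hcosemis (N+1) (ExtCorep v ρ)
    (extCorep_isCorep v ρ hv hρ hε) (Wker N) (Wker_invariant v ρ)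
  -- find the vector q ∈ W' with last coordinate 1
  have htop : Wker N ⊔ W' = ⊤ := hcompl.sup_eq_top
  have hmem : (Pi.single (Fin.last N) (1:ℂ) : Fin (N+1) → ℂ) ∈ Wker N ⊔ W' := by
    rw [htop]; trivial
  obtain ⟨p, hp, q, hq, hpq⟩ := Submodule.mem_sup.mp hmem
  have hpl : p (Fin.last N) = 0 := hp
  have hql : q (Fin.last N) = 1 := by
    have := congrFun hpq (Fin.last N)
    simpa [hpl] using this
  -- every element of W' is a multiple of q
  have hW'q : ∀ y ∈ W', y = y (Fin.last N) • q := by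
    intro y hy
    have hmem0 : y - y (Fin.last N) • q ∈ Wker N ⊓ W' := by
      constructor
      · simp [mem_Wker, hql]
      · exact Submodule.sub_mem _ hy (Submodule.smul_mem _ _ hq)
    rw [hcompl.inf_eq_bot] at hmem0
    have := Submodule.mem_bot ℂ |>.mp hmem0
    exact sub_eq_zero.mp this
  -- invariance of W' applied to q
  set qA : Fin (N+1) → A := fun j => algebraMap ℂ A (q j) with hqA
  have hspan : Submodule.span A
      ((fun (w : Fin (N+1) → ℂ) (j : Fin (N+1)) => algebraMap ℂ A (w j)) ''
        (W' : Set (Fin (N+1) → ℂ))) ≤ Submodule.span A {qA} := by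
    rw [Submodule.span_le]
    rintro _ ⟨y, hy, rfl⟩
    have hy' := hW'q y hy
    have : (fun j => algebraMap ℂ A (y j)) = algebraMap ℂ A (y (Fin.last N)) • qA := by
      funext j
      rw [congrFun hy' j]
      simp [hqA, Algebra.smul_def]
    show (fun j => algebraMap ℂ A (y j)) ∈ _
    rw [this]
    exact Submodule.smul_mem _ _ (Submodule.mem_span_singleton_self _)
  obtain ⟨a, ha⟩ := Submodule.mem_span_singleton.mp (hspan (hW'inv q hq))
  -- the coefficient is 1
  have ha1 : a = 1 := by
    have := congrFun ha (Fin.last N)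
    simp [Matrix.mulVec, dotProduct, Fin.sum_univ_castSucc, hqA, hql] at this
    simpa using this
  -- conclude
  refine ⟨fun k => q k.castSucc, fun k => ?_⟩
  have hk := congrFun ha k.castSucc
  rw [ha1] at hk
  simp only [one_smul] at hk
  have hL : qA k.castSucc = q k.castSucc • (1:A) := by
    simp [hqA, Algebra.smul_def]
  have hR : Matrix.mulVec (ExtCorep v ρ) qA k.castSucc
      = (∑ l, q l.castSucc • v k l) + ρ k := by
    simp only [Matrix.mulVec, dotProduct, Fin.sum_univ_castSucc, extCorep_cc,
      extCorep_cl, hqA, hql, map_one, mul_one]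
    congr 1
    refine Finset.sum_congr rfl fun l _ => ?_
    rw [Algebra.smul_def, Algebra.commutes]
  rw [hL, hR] at hk
  show ρ k = q k.castSucc • (1:A) - ∑ l, q l.castSucc • v k l
  rw [hk]
  abel

end
end
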